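/- arXiv:2502.03136 — 3 statements merged into one kernel-verified Lean document; each statement's English description precedes it below -/
import Mathlib

section
/- Every Lyndon word of length at least 2 over a linearly ordered alphabet admits a standard factorization u = vw where w is the longest proper suffix of u that is a Lyndon word, and then both v and w are Lyndon words with v < w in lexicographic order. -/
/-! Let `w` be the lexicographically least proper nonempty suffix of `u = v ++ w`. Every proper
suffix of `w` is a proper suffix of `u`, hence `≥ w`, so `w` is Lyndon; a longer Lyndon suffix `w'`
would have `w` as a proper suffix, whence `w' < w`, against minimality. For `v = p ++ s`, the
Lyndon property of `u` gives `p ++ s ++ w < s ++ w`; either this comparison is decided inside `s`,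
giving `v < s`, or `s` is a proper prefix `v = s ++ q`, and cancelling `s` yields `q ++ w < w`,
again against minimality. Finally `v < v ++ w = u < w`. -/

/-- A word over a linearly ordered alphabet is a Lyndon word if it is nonempty and strictly
lexicographically smaller than each of its proper nonempty suffixes. -/
def IsLyndon {α : Type*} [LinearOrder α] (w : List α) : Prop :=
  w ≠ [] ∧ ∀ u v : List α, w = u ++ v → u ≠ [] → v ≠ [] → List.Lex (· < ·) w v

namespace List

variable {α : Type*} [LinearOrder α]

theorem lt_append_of_ne_nil (v : List α) {w : List α} (hw : w ≠ []) : v < v ++ w := by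
  obtain ⟨a, w, rfl⟩ := exists_cons_of_ne_nil hw
  simpa using append_left_lt (l₁ := v) (nil_lt_cons a w)

theorem lt_of_append_lt_append_left {s b c : List α} (h : s ++ b < s ++ c) : b < c :=
  (StrictMono.lt_iff_lt fun _ _ => append_left_lt).mp h

theorem lt_or_isPrefix_or_isPrefix_of_append_lt :
    ∀ {v x s y : List α}, v ++ x < s ++ y → v < s ∨ v <+: s ∨ s <+: v
  | [], _, _, _, _ => .inr (.inl nil_prefix)
  | _ :: _, _, [], _, _ => .inr (.inr nil_prefix)
  | _ :: _, _, _ :: _, _, .rel h => .inl (.rel h)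
  | _ :: _, _, _ :: _, _, .cons h => by
    rcases lt_or_isPrefix_or_isPrefix_of_append_lt h with h | h | h
    · exact .inl (.cons h)
    · exact .inr (.inl (cons_prefix_cons.2 ⟨rfl, h⟩))
    · exact .inr (.inr (cons_prefix_cons.2 ⟨rfl, h⟩))

end List

section Lyndon

open List

variable {α : Type*} [LinearOrder α]

theorem isLyndon_of_le_proper_suffixes {w : List α} (hw : w ≠ [])
    (h : ∀ p t, w = p ++ t → p ≠ [] → t ≠ [] → w ≤ t) : IsLyndon w := by
  refine ⟨hw, fun p t hpt hp ht => (h p t hpt hp ht).lt_of_ne ?_⟩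
  rintro rfl
  exact hp (by simpa using congrArg length hpt)

theorem exists_min_proper_suffix {u : List α} (hlen : 2 ≤ u.length) :
    ∃ v w, u = v ++ w ∧ v ≠ [] ∧ w ≠ [] ∧ ∀ p t, u = p ++ t → p ≠ [] → t ≠ [] → w ≤ t := by
  obtain ⟨i, hi, hmin⟩ :=
    Finset.exists_min_image (Finset.Ico 1 u.length) u.drop ⟨1, Finset.mem_Ico.2 ⟨le_rfl, hlen⟩⟩
  rw [Finset.mem_Ico] at hi
  refine ⟨u.take i, u.drop i, (take_append_drop i u).symm, ?_, ?_, ?_⟩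
  · simp only [ne_eq, take_eq_nil_iff, not_or]
    exact ⟨by omega, ne_nil_of_length_pos (by omega)⟩
  · simp only [ne_eq, drop_eq_nil_iff]
    omega
  · rintro p t rfl hp ht
    have hp : 1 ≤ p.length := length_pos_iff.2 hp
    have ht : 0 < t.length := length_pos_iff.2 ht
    simpa using hmin p.length (Finset.mem_Ico.2 ⟨hp, by simp; omega⟩)

theorem isLyndon_of_min_proper_suffix {u v w : List α} (huvw : u = v ++ w) (hw : w ≠ [])
    (hmin : ∀ p t, u = p ++ t → p ≠ [] → t ≠ [] → w ≤ t) : IsLyndon w :=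
  isLyndon_of_le_proper_suffixes hw fun p t hpt hp ht =>
    hmin (v ++ p) t (by rw [huvw, hpt, append_assoc]) (by simp [hp]) ht

theorem length_le_of_min_proper_suffix {u v w v' w' : List α} (huvw : u = v ++ w) (hw : w ≠ [])
    (hmin : ∀ p t, u = p ++ t → p ≠ [] → t ≠ [] → w ≤ t)
    (huvw' : u = v' ++ w') (hv' : v' ≠ []) (hw' : IsLyndon w') : w'.length ≤ w.length := by
  by_contra! hlt
  obtain ⟨p, rfl⟩ := suffix_of_suffix_length_le ⟨v, huvw.symm⟩ ⟨v', huvw'.symm⟩ hlt.le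
  have hp : p ≠ [] := by
    rintro rfl
    simp at hlt
  exact (hmin v' (p ++ w) huvw' hv' hw'.1).not_gt (hw'.2 p w rfl hp hw)

theorem isLyndon_left_of_min_proper_suffix {u v w : List α} (hu : IsLyndon u)
    (huvw : u = v ++ w) (hv : v ≠ []) (hw : w ≠ [])
    (hmin : ∀ p t, u = p ++ t → p ≠ [] → t ≠ [] → w ≤ t) : IsLyndon v := by
  refine ⟨hv, fun p s hps hp hs => ?_⟩
  subst hps
  have hlt : (p ++ s) ++ w < s ++ w :=
    huvw ▸ hu.2 p (s ++ w) (by rw [huvw, append_assoc]) hp (by simp [hw])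
  rcases lt_or_isPrefix_or_isPrefix_of_append_lt hlt with h | h | ⟨q, hq⟩
  · exact h
  · exact absurd (by simpa using h.length_le) hp
  · rw [← hq, append_assoc] at hlt huvw
    exact absurd (lt_of_append_lt_append_left hlt) (hmin s (q ++ w) huvw hs (by simp [hw])).not_gt

end Lyndon

/-- Every Lyndon word `u` of length at least `2` admits a standard
factorization `u = v ++ w` where `w` is the longest proper nonempty suffix of `u` that is
a Lyndon word; and then both `v` and `w` are Lyndon words with `v < w` lexicographically. -/
theorem lyndon_standard_factorization {α : Type*} [LinearOrder α]
    (u : List α) (hu : IsLyndon u) (hlen : 2 ≤ u.length) :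
    ∃ v w : List α, u = v ++ w ∧ v ≠ [] ∧ w ≠ [] ∧ IsLyndon w ∧
      (∀ v' w' : List α, u = v' ++ w' → v' ≠ [] → w' ≠ [] → IsLyndon w' →
        w'.length ≤ w.length) ∧
      IsLyndon v ∧ List.Lex (· < ·) v w := by
  obtain ⟨v, w, huvw, hv, hw, hmin⟩ := exists_min_proper_suffix hlen
  refine ⟨v, w, huvw, hv, hw, isLyndon_of_min_proper_suffix huvw hw hmin,
    fun v' w' huvw' hv' _ hw' => length_le_of_min_proper_suffix huvw hw hmin huvw' hv' hw',
    isLyndon_left_of_min_proper_suffix hu huvw hv hw hmin, ?_⟩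
  calc v < v ++ w := List.lt_append_of_ne_nil v hw
    _ = u := huvw.symm
    _ < w := hu.2 v w huvw hv hw
end

section
/- The number of Lyndon words of length k over an alphabet of n letters equals (1/k) Σ_{d | k} μ(k/d) n^d, where μ is the Möbius function. -/
namespace List

variable {α : Type*}

theorem length_flatten_replicate (u : List α) (m : ℕ) :
    (replicate m u).flatten.length = m * u.length := by
  simp

theorem getElem_flatten_replicate (u : List α) (m i : ℕ)
    (hi : i < (replicate m u).flatten.length) :
    (replicate m u).flatten[i] =
      u[i % u.length]'(Nat.mod_lt _ (length_pos_iff.mpr fun hu => by simp [hu] at hi)) := by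
  induction m generalizing i with
  | zero => simp at hi
  | succ m ih =>
    simp only [replicate_succ, flatten_cons, getElem_append]
    split_ifs with h
    · simp only [Nat.mod_eq_of_lt h]
    · simp only [ih, ← Nat.mod_eq_sub_mod (not_lt.mp h)]

theorem rotate_flatten_replicate (u : List α) (m j : ℕ) :
    (replicate m u).flatten.rotate j = (replicate m (u.rotate j)).flatten := by
  refine ext_getElem (by simp) fun i _ _ => ?_
  simp only [getElem_rotate, getElem_flatten_replicate, length_flatten_replicate, length_rotate,
    Nat.mod_mod_of_dvd _ (Nat.dvd_mul_left _ _), Nat.mod_add_mod]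

theorem take_length_flatten_replicate (u : List α) {m : ℕ} (hm : m ≠ 0) :
    (replicate m u).flatten.take u.length = u := by
  obtain ⟨m, rfl⟩ := Nat.exists_eq_succ_of_ne_zero hm
  simp [replicate_succ]

theorem eq_of_flatten_replicate_eq {u v : List α} {m : ℕ} (hm : m ≠ 0)
    (hl : u.length = v.length) (h : (replicate m u).flatten = (replicate m v).flatten) : u = v := by
  rw [← take_length_flatten_replicate u hm, h, hl, take_length_flatten_replicate v hm]

noncomputable def rotationPeriod (l : List α) : ℕ :=
  Function.minimalPeriod (rotate · 1) l

theorem iterate_rotate_one (l : List α) (j : ℕ) : (rotate · 1)^[j] l = l.rotate j := by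
  induction j with
  | zero => simp
  | succ j ih => rw [Function.iterate_succ_apply', ih, rotate_rotate]

theorem isPeriodicPt_rotate_one_iff {l : List α} {j : ℕ} :
    Function.IsPeriodicPt (rotate · 1) j l ↔ l.rotate j = l := by
  rw [Function.IsPeriodicPt, Function.IsFixedPt, iterate_rotate_one]

theorem rotationPeriod_dvd_iff {l : List α} {j : ℕ} :
    l.rotationPeriod ∣ j ↔ l.rotate j = l := by
  rw [rotationPeriod, ← Function.isPeriodicPt_iff_minimalPeriod_dvd, isPeriodicPt_rotate_one_iff]

theorem rotate_rotationPeriod (l : List α) : l.rotate l.rotationPeriod = l :=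
  rotationPeriod_dvd_iff.mp dvd_rfl

theorem rotationPeriod_dvd_length (l : List α) : l.rotationPeriod ∣ l.length :=
  rotationPeriod_dvd_iff.mpr l.rotate_length

theorem mem_periodicPts_rotate_one (l : List α) : l ∈ Function.periodicPts (rotate · 1) := by
  rcases eq_or_ne l [] with rfl | hl
  · exact ⟨1, one_pos, isPeriodicPt_rotate_one_iff.mpr rfl⟩
  · exact ⟨l.length, length_pos_iff.mpr hl, isPeriodicPt_rotate_one_iff.mpr l.rotate_length⟩

theorem rotationPeriod_pos (l : List α) : 0 < l.rotationPeriod :=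
  Function.minimalPeriod_pos_of_mem_periodicPts (mem_periodicPts_rotate_one l)

theorem rotationPeriod_rotate (l : List α) (j : ℕ) :
    (l.rotate j).rotationPeriod = l.rotationPeriod := by
  rw [rotationPeriod, ← iterate_rotate_one,
    Function.minimalPeriod_apply_iterate (mem_periodicPts_rotate_one l)]
  rfl

theorem rotate_injOn (l : List α) : Set.InjOn l.rotate (Set.Iio l.rotationPeriod) := by
  have h := Function.iterate_injOn_Iio_minimalPeriod (f := (rotate · 1)) (x := l)
  simp only [iterate_rotate_one] at h
  exact h

theorem getElem_eq_getElem_mod_of_rotate_eq_self {l : List α} {p : ℕ} (h : l.rotate p = l)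
    (i : ℕ) (hi : i < l.length) : l[i] = l[i % p]'((Nat.mod_le i p).trans_lt hi) := by
  have hq : l.rotate (p * (i / p)) = l :=
    rotationPeriod_dvd_iff.mp ((rotationPeriod_dvd_iff.mpr h).mul_right _)
  rw [getElem_of_eq hq.symm ((Nat.mod_le i p).trans_lt hi), getElem_rotate]
  simp [Nat.mod_add_div, Nat.mod_eq_of_lt hi]

theorem eq_flatten_replicate_of_rotate_eq_self {l : List α} {p : ℕ} (hp : p ∣ l.length)
    (h : l.rotate p = l) : l = (replicate (l.length / p) (l.take p)).flatten := by
  rcases eq_or_ne l [] with rfl | hl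
  · simp
  have hpl : p ≤ l.length := Nat.le_of_dvd (length_pos_iff.mpr hl) hp
  refine ext_getElem (by simp [Nat.div_mul_cancel hp, hpl]) fun i hi _ => ?_
  rw [getElem_flatten_replicate, getElem_take, getElem_eq_getElem_mod_of_rotate_eq_self h i hi]
  simp [hpl]

theorem rotationPeriod_flatten_replicate (u : List α) {m : ℕ} (hm : m ≠ 0) :
    (replicate m u).flatten.rotationPeriod = u.rotationPeriod := by
  have key : ∀ j, (replicate m u).flatten.rotate j = (replicate m u).flatten ↔ u.rotate j = u := by
    intro j
    rw [rotate_flatten_replicate]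
    exact ⟨eq_of_flatten_replicate_eq hm (length_rotate u j), fun h => by rw [h]⟩
  exact Nat.dvd_antisymm (rotationPeriod_dvd_iff.mpr ((key _).mpr u.rotate_rotationPeriod))
    (rotationPeriod_dvd_iff.mpr ((key _).mp (rotate_rotationPeriod _)))

theorem rotationPeriod_take_rotationPeriod (l : List α) :
    (l.take l.rotationPeriod).rotationPeriod = l.rotationPeriod := by
  rcases eq_or_ne l [] with rfl | hl
  · simp
  have hm : l.length / l.rotationPeriod ≠ 0 :=
    (Nat.div_pos (Nat.le_of_dvd (length_pos_iff.mpr hl) l.rotationPeriod_dvd_length)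
      l.rotationPeriod_pos).ne'
  conv_rhs => rw [eq_flatten_replicate_of_rotate_eq_self l.rotationPeriod_dvd_length
    l.rotate_rotationPeriod]
  rw [rotationPeriod_flatten_replicate _ hm]

section Lex

variable [LT α]

theorem append_lt_append_left_iff [Std.Irrefl (· < · : α → α → Prop)] {s x y : List α} :
    s ++ x < s ++ y ↔ x < y := by
  induction s with
  | nil => rfl
  | cons a s ih => simpa using ih

theorem append_lt_append_of_lt_of_length_eq {t a : List α} (h : t < a)
    (hl : t.length = a.length) (x y : List α) : t ++ x < a ++ y := by
  induction h with
  | nil => simp at hl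
  | rel h => exact Lex.rel h
  | cons _ ih => exact Lex.cons (ih (by simpa using hl))

theorem lt_of_lt_append_of_not_prefix {x y z : List α} (h : x < y ++ z) (hp : ¬y <+: x) :
    x < y := by
  induction x generalizing y with
  | nil =>
    cases y with
    | nil => exact absurd nil_prefix hp
    | cons b y => exact Lex.nil
  | cons a x ih =>
    cases y with
    | nil => exact absurd nil_prefix hp
    | cons b y =>
      cases h with
      | rel h => exact Lex.rel h
      | cons h => exact Lex.cons (ih h fun hy => hp (cons_prefix_cons.mpr ⟨rfl, hy⟩))

end Lex

end List

open List

section Lyndon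

variable {α : Type*} [LinearOrder α]

theorem IsLyndon.lt_rotate {w : List α} (h : IsLyndon w) {j : ℕ} (hj₀ : 0 < j)
    (hj : j < w.length) : w < w.rotate j := by
  rw [rotate_eq_drop_append_take hj.le]
  refine Lex.append_right _ _ (h.2 _ _ (take_append_drop j w).symm ?_ ?_)
  · simp [take_eq_nil_iff, hj₀.ne', h.1]
  · simp [drop_eq_nil_iff, hj]

theorem IsLyndon.le_rotate {w : List α} (h : IsLyndon w) (j : ℕ) : w ≤ w.rotate j := by
  rw [← rotate_mod]
  rcases Nat.eq_zero_or_pos (j % w.length) with hj | hj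
  · rw [hj, rotate_zero]
  · exact (h.lt_rotate hj (Nat.mod_lt _ (length_pos_iff.mpr h.1))).le

theorem IsLyndon.eq_of_isRotated {w w' : List α} (h : IsLyndon w) (h' : IsLyndon w')
    (hr : w ~r w') : w = w' := by
  obtain ⟨j, rfl⟩ := hr
  obtain ⟨j', hj'⟩ := IsRotated.forall w j
  exact le_antisymm (h.le_rotate j) (by simpa only [hj'] using h'.le_rotate j')

theorem IsLyndon.rotationPeriod_eq_length {w : List α} (h : IsLyndon w) :
    w.rotationPeriod = w.length := by
  have hpos : 0 < w.length := length_pos_iff.mpr h.1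
  refine (Nat.le_of_dvd hpos w.rotationPeriod_dvd_length).antisymm (not_lt.mp fun hlt => ?_)
  have := h.lt_rotate w.rotationPeriod_pos hlt
  rw [rotate_rotationPeriod] at this
  exact lt_irrefl _ this

theorem isLyndon_of_lt_rotate {w : List α} (hw : w ≠ [])
    (hlt : ∀ j, 0 < j → j < w.length → w < w.rotate j) : IsLyndon w := by
  refine ⟨hw, fun a b hab ha hb => ?_⟩
  have ha₀ : 0 < a.length := length_pos_iff.mpr ha
  have hb₀ : 0 < b.length := length_pos_iff.mpr hb
  have hlen : w.length = a.length + b.length := by rw [hab, length_append]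
  have hba : w < b ++ a := by
    simpa only [hab, rotate_append_length_eq] using hlt a.length ha₀ (by omega)
  by_cases hp : b <+: w
  · -- then `w = b ++ t` with `t < a`, and the rotation `t ++ b` would be smaller than `a ++ b = w`
    obtain ⟨t, ht⟩ := hp
    have hta : t < a := append_lt_append_left_iff.mp (ht ▸ hba)
    have htl : t.length = a.length := by
      have := congrArg length ht
      simp only [length_append] at this
      omega
    have htb : t ++ b < w := hab ▸ append_lt_append_of_lt_of_length_eq hta htl b b
    have := hlt b.length hb₀ (by omega)
    rw [← ht, rotate_append_length_eq, ht] at this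
    exact absurd (this.trans htb) (lt_irrefl _)
  · exact lt_of_lt_append_of_not_prefix hba hp

theorem exists_isLyndon_isRotated {u : List α} (hu : u.rotationPeriod = u.length) :
    ∃ w, IsLyndon w ∧ w ~r u := by
  have hpos : 0 < u.length := hu ▸ u.rotationPeriod_pos
  obtain ⟨j, -, hmin⟩ := (Finset.range u.length).exists_min_image u.rotate
    (Finset.nonempty_range_iff.mpr hpos.ne')
  refine ⟨u.rotate j, isLyndon_of_lt_rotate ?_ fun i hi₀ hi => ?_, IsRotated.forall u j⟩
  · simpa using length_pos_iff.mp hpos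
  rw [length_rotate] at hi
  have hle : u.rotate j ≤ (u.rotate j).rotate i := by
    rw [rotate_rotate, ← rotate_mod u (j + i)]
    exact hmin _ (Finset.mem_range.mpr (Nat.mod_lt _ hpos))
  refine hle.lt_of_ne fun heq => ?_
  have := rotationPeriod_dvd_iff.mpr heq.symm
  rw [rotationPeriod_rotate, hu] at this
  exact absurd (Nat.le_of_dvd hi₀ this) (not_le.mpr hi)

end Lyndon

section Counting

variable (α : Type*)

-- Primitive words are those that are not proper powers, encoded here through rotations.
def primitiveWords (d : ℕ) : Set (List α) := {u | u.length = d ∧ u.rotationPeriod = d}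

def lyndonWords [LinearOrder α] (d : ℕ) : Set (List α) := {w | w.length = d ∧ IsLyndon w}

instance [Finite α] (d : ℕ) : Finite (primitiveWords α d) :=
  ((List.finite_length_eq α d).subset fun _ hu => hu.1).to_subtype

def rotateLyndon [LinearOrder α] (d : ℕ) (p : lyndonWords α d × Fin d) : primitiveWords α d :=
  ⟨p.1.1.rotate p.2, by simp [p.1.2.1],
    by rw [rotationPeriod_rotate, p.1.2.2.rotationPeriod_eq_length, p.1.2.1]⟩

theorem rotateLyndon_bijective [LinearOrder α] (d : ℕ) : (rotateLyndon α d).Bijective := by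
  constructor
  · rintro ⟨⟨w, hwd, hw⟩, i⟩ ⟨⟨w', hwd', hw'⟩, i'⟩ h
    have h : w.rotate i = w'.rotate i' := congrArg Subtype.val h
    obtain rfl : w = w' :=
      hw.eq_of_isRotated hw' ((IsRotated.forall w i).symm.trans (h ▸ IsRotated.forall w' i'))
    have hper : w.rotationPeriod = d := hw.rotationPeriod_eq_length.trans hwd
    obtain rfl : i = i' := Fin.ext (w.rotate_injOn (by simp [hper]) (by simp [hper]) h)
    rfl
  · rintro ⟨u, hud, hup⟩
    obtain ⟨w, hw, j, rfl⟩ := exists_isLyndon_isRotated (hup.trans hud.symm)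
    have hwd : w.length = d := by simpa using hud
    have hd : 0 < d := hup ▸ rotationPeriod_pos _
    refine ⟨(⟨w, hwd, hw⟩, ⟨j % d, Nat.mod_lt _ hd⟩), Subtype.ext ?_⟩
    simp [rotateLyndon, ← hwd, rotate_mod]

theorem card_primitiveWords [LinearOrder α] (d : ℕ) :
    Nat.card (primitiveWords α d) = d * (lyndonWords α d).ncard := by
  rw [← Nat.card_congr (Equiv.ofBijective _ (rotateLyndon_bijective α d)), Nat.card_prod,
    Nat.card_fin, mul_comm, Nat.card_coe_set_eq]

def flattenReplicate (k : ℕ) (p : Σ d : k.divisors, primitiveWords α d) : List.Vector α k :=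
  ⟨(replicate (k / p.1) p.2.1).flatten, by
    simp [p.2.2.1, Nat.div_mul_cancel (Nat.dvd_of_mem_divisors p.1.2)]⟩

theorem flattenReplicate_bijective {k : ℕ} (hk : k ≠ 0) : (flattenReplicate α k).Bijective := by
  have hm : ∀ d ∈ k.divisors, k / d ≠ 0 := fun d hd =>
    (Nat.div_pos (Nat.divisor_le hd) (Nat.pos_of_mem_divisors hd)).ne'
  constructor
  · rintro ⟨⟨d, hd⟩, u, hud, hup⟩ ⟨⟨d', hd'⟩, u', hud', hup'⟩ h
    have h : (replicate (k / d) u).flatten = (replicate (k / d') u').flatten :=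
      congrArg Subtype.val h
    obtain rfl : d = d' := by
      simpa only [rotationPeriod_flatten_replicate _ (hm d hd),
        rotationPeriod_flatten_replicate _ (hm d' hd'), hup, hup'] using congrArg rotationPeriod h
    obtain rfl : u = u' := eq_of_flatten_replicate_eq (hm d hd) (hud.trans hud'.symm) h
    rfl
  · rintro ⟨w, rfl⟩
    have hp := w.rotationPeriod_dvd_length
    have hpl : w.rotationPeriod ≤ w.length := Nat.le_of_dvd (Nat.pos_of_ne_zero hk) hp
    refine ⟨⟨⟨w.rotationPeriod, Nat.mem_divisors.mpr ⟨hp, hk⟩⟩, w.take w.rotationPeriod,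
      by simp [hpl], w.rotationPeriod_take_rotationPeriod⟩, Subtype.ext ?_⟩
    exact (eq_flatten_replicate_of_rotate_eq_self hp w.rotate_rotationPeriod).symm

theorem sum_card_primitiveWords [Fintype α] {k : ℕ} (hk : k ≠ 0) :
    ∑ d ∈ k.divisors, Nat.card (primitiveWords α d) = Fintype.card α ^ k := by
  rw [← card_vector, ← Nat.card_eq_fintype_card,
    ← Nat.card_congr (Equiv.ofBijective _ (flattenReplicate_bijective α hk)), Nat.card_sigma,
    Finset.sum_coe_sort k.divisors fun d => Nat.card (primitiveWords α d)]

theorem sum_divisors_mul_ncard_lyndonWords [Fintype α] [LinearOrder α] {k : ℕ} (hk : k ≠ 0) :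
    ∑ d ∈ k.divisors, d * (lyndonWords α d).ncard = Fintype.card α ^ k := by
  simpa only [card_primitiveWords] using sum_card_primitiveWords α hk

end Counting

/-- The number of Lyndon words of length `k ≥ 1` over an alphabet of `n`
letters equals `(1/k) ∑_{d ∣ k} μ(k/d) n^d`, where `μ` is the Möbius function. -/
theorem card_lyndon_words (n k : ℕ) (hk : 0 < k) :
    (k : ℤ) * ({w : List (Fin n) | w.length = k ∧ IsLyndon w}.ncard : ℤ)
      = ∑ d ∈ k.divisors, (ArithmeticFunction.moebius (k / d)) * (n : ℤ) ^ d := by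
  have hsum : ∀ m > 0,
      ∑ d ∈ m.divisors, ((d : ℕ) : ℤ) * (lyndonWords (Fin n) d).ncard = (n : ℤ) ^ m := by
    intro m hm
    have h := sum_divisors_mul_ncard_lyndonWords (Fin n) hm.ne'
    rw [Fintype.card_fin] at h
    exact_mod_cast h
  rw [← Nat.sum_divisorsAntidiagonal' fun a b => ArithmeticFunction.moebius a * (n : ℤ) ^ b]
  exact (ArithmeticFunction.sum_eq_iff_sum_mul_moebius_eq.mp hsum k hk).symm
end

section
/- Let x be an element of a complete filtered associative ℚ-algebra with x in filtration degree ≥ 1 and all 'coefficients' integral, and let (k_i) be a sequence of integers converging to t in ℤ_p. Then (1+x)^{k_i} converges coefficientwise to (1+x)^t, where (1+x)^t is defined by the binomial series; in particular each coefficient of (1+x)^t is a p-adic limit of integers. -/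
def NCSeries (E : Type*) [CommRing E] (n : ℕ) : Type _ := List (Fin n) → E

namespace NCSeries

variable {E : Type*} [CommRing E] {n : ℕ}

instance : AddCommGroup (NCSeries E n) := inferInstanceAs (AddCommGroup (List (Fin n) → E))

instance : Mul (NCSeries E n) :=
  ⟨fun f g w => ∑ i ∈ Finset.range (w.length + 1), f (w.take i) * g (w.drop i)⟩

instance : One (NCSeries E n) := ⟨fun w => if w = [] then 1 else 0⟩

theorem mul_apply (f g : NCSeries E n) (w : List (Fin n)) :
    (f * g) w = ∑ i ∈ Finset.range (w.length + 1), f (w.take i) * g (w.drop i) := rfl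

theorem one_apply (w : List (Fin n)) : (1 : NCSeries E n) w = if w = [] then 1 else 0 := rfl

theorem add_apply (f g : NCSeries E n) (w : List (Fin n)) : (f + g) w = f w + g w := rfl

private theorem mul_assoc' (f g h : NCSeries E n) : f * g * h = f * (g * h) := by
  funext w
  rw [mul_apply, mul_apply]
  have L : ∀ j ∈ Finset.range (w.length + 1),
      (f * g) (w.take j) * h (w.drop j)
        = ∑ i ∈ Finset.range (j + 1),
            f (w.take i) * g ((w.drop i).take (j - i)) * h (w.drop j) := by
    intro j hj
    rw [Finset.mem_range] at hj
    rw [mul_apply, Finset.sum_mul]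
    have hlen : (w.take j).length = j := by
      rw [List.length_take]; omega
    rw [hlen]
    refine Finset.sum_congr rfl fun i hi => ?_
    rw [Finset.mem_range] at hi
    have e1 : (w.take j).take i = w.take i := by
      rw [List.take_take, Nat.min_eq_left (by omega)]
    have e2 : (w.take j).drop i = (w.drop i).take (j - i) := by
      rw [List.drop_take]
    rw [e1, e2]
  have R : ∀ i ∈ Finset.range (w.length + 1),
      f (w.take i) * (g * h) (w.drop i)
        = ∑ j ∈ Finset.Icc i w.length,
            f (w.take i) * g ((w.drop i).take (j - i)) * h (w.drop j) := by
    intro i hi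
    rw [Finset.mem_range] at hi
    rw [mul_apply, Finset.mul_sum]
    have hlen : (w.drop i).length = w.length - i := by rw [List.length_drop]
    rw [hlen]
    rw [show Finset.range (w.length - i + 1) = Finset.image (fun j => j - i) (Finset.Icc i w.length) from ?_]
    · rw [Finset.sum_image ?_]
      · refine Finset.sum_congr rfl fun j hj => ?_
        rw [Finset.mem_Icc] at hj
        have e3 : (w.drop i).drop (j - i) = w.drop j := by
          rw [List.drop_drop]
          congr 1
          omega
        rw [e3, mul_assoc]
      · intro a ha b hb hab
        rw [Finset.mem_coe, Finset.mem_Icc] at ha hb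
        simp only at hab
        omega
    · ext j
      simp only [Finset.mem_range, Finset.mem_image, Finset.mem_Icc]
      constructor
      · intro hj; exact ⟨j + i, by omega, by omega⟩
      · rintro ⟨a, ⟨h1, h2⟩, rfl⟩; omega
  rw [Finset.sum_congr rfl L, Finset.sum_congr rfl R]
  exact Finset.sum_comm' (by
    intro j i
    simp only [Finset.mem_range, Finset.mem_Icc]
    omega)

private theorem one_mul' (f : NCSeries E n) : 1 * f = f := by
  funext w
  rw [mul_apply]
  rw [Finset.sum_eq_single 0]
  · simp [one_apply]
  · intro b hb hb0
    rw [Finset.mem_range] at hb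
    have hlen : (w.take b).length = b := by rw [List.length_take]; omega
    have : w.take b ≠ [] := by
      intro hcon
      rw [hcon] at hlen
      simp at hlen
      omega
    simp [one_apply, this]
  · intro h; simp at h

private theorem mul_one' (f : NCSeries E n) : f * 1 = f := by
  funext w
  rw [mul_apply]
  rw [Finset.sum_eq_single w.length]
  · simp [one_apply]
  · intro b hb hb0
    rw [Finset.mem_range] at hb
    have hlen : (w.drop b).length = w.length - b := by rw [List.length_drop]
    have : w.drop b ≠ [] := by
      intro hcon
      rw [hcon] at hlen
      simp at hlen
      omega
    simp [one_apply, this]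
  · intro h; simp at h

instance instRing : Ring (NCSeries E n) where
  __ := (inferInstance : AddCommGroup (NCSeries E n))
  mul := (· * ·)
  one := 1
  mul_assoc := mul_assoc'
  one_mul := one_mul'
  mul_one := mul_one'
  left_distrib := fun f g h => by
    funext w
    simp only [mul_apply, add_apply, mul_add, Finset.sum_add_distrib]
  right_distrib := fun f g h => by
    funext w
    simp only [mul_apply, add_apply, add_mul, Finset.sum_add_distrib]
  zero_mul := fun f => by
    funext w
    simp only [mul_apply]
    simp [show ∀ u, (0 : NCSeries E n) u = 0 from fun _ => rfl]
  mul_zero := fun f => by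
    funext w
    simp only [mul_apply]
    simp [show ∀ u, (0 : NCSeries E n) u = 0 from fun _ => rfl]

end NCSeries

/-- The generalized binomial coefficient `C(t,m) = t(t-1)⋯(t-m+1)/m!` in a ring containing `ℚ`. -/
noncomputable def genBinom {E : Type*} [CommRing E] [Algebra ℚ E] (t : E) (m : ℕ) : E :=
  algebraMap ℚ E ((m.factorial : ℚ)⁻¹) * ∏ i ∈ Finset.range m, (t - (i : ℕ))

/-- The binomial series `(1+x)^t = ∑ₘ C(t,m) xᵐ`, defined coefficientwise (each coefficient
is a finite sum since `x` has zero constant term). -/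
noncomputable def NCSeries.onePow {E : Type*} [CommRing E] [Algebra ℚ E] {n : ℕ}
    (x : NCSeries E n) (t : E) : NCSeries E n :=
  fun w => ∑ m ∈ Finset.range (w.length + 1), genBinom t m * ((x ^ m) w)

/-! Each coefficient of `(1+x)^t` is a polynomial in `t`, hence continuous in `t`; this gives
the convergence. At an integer `k` the binomial coefficients `C(k, m)` are integers, so by the
ultrametric inequality every coefficient of `(1+x)^k` lies in the unit ball `ℤ_p`, which is
closed and is the closure of `ℤ`; passing to the limit gives the same for `(1+x)^t`. -/

open Filter Topology

theorem genBinom_intCast {E : Type*} [CommRing E] [Algebra ℚ E] (k : ℤ) (m : ℕ) :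
    genBinom (k : E) m = ((Ring.choose k m : ℤ) : E) := by
  have hprod :
      ∏ i ∈ Finset.range m, ((k : E) - (i : ℕ)) = (m.factorial : E) * Ring.choose k m := by
    have h := Ring.descPochhammer_eq_factorial_smul_choose k m
    rw [← Polynomial.eval_eq_smeval, descPochhammer_eval_eq_prod_range, nsmul_eq_mul] at h
    exact_mod_cast congrArg (Int.cast : ℤ → E) h
  have hinv : algebraMap ℚ E ((m.factorial : ℚ)⁻¹) * (m.factorial : E) = 1 := by
    rw [← map_natCast (algebraMap ℚ E), ← map_mul, inv_mul_cancel₀ (by positivity), map_one]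
  rw [genBinom, hprod, ← mul_assoc, hinv, one_mul]

theorem continuous_genBinom {E : Type*} [CommRing E] [Algebra ℚ E] [TopologicalSpace E]
    [IsTopologicalRing E] (m : ℕ) : Continuous fun t : E => genBinom t m :=
  continuous_const.mul <| continuous_finsetProd _ fun _ _ => continuous_id.sub continuous_const

namespace NCSeries

theorem continuous_onePow_apply {E : Type*} [CommRing E] [Algebra ℚ E] [TopologicalSpace E]
    [IsTopologicalRing E] {n : ℕ} (x : NCSeries E n) (w : List (Fin n)) :
    Continuous fun t : E => onePow x t w :=
  continuous_finsetSum _ fun m _ => (continuous_genBinom m).mul continuous_const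

section Ultrametric

variable {E : Type*} [NormedCommRing E] [NormOneClass E] [IsUltrametricDist E] {n : ℕ}

theorem norm_pow_apply_le_one {x : NCSeries E n} (hx : ∀ w, ‖x w‖ ≤ 1) (m : ℕ)
    (w : List (Fin n)) : ‖(x ^ m) w‖ ≤ 1 := by
  induction m generalizing w with
  | zero =>
    rw [pow_zero, one_apply]
    split_ifs <;> simp
  | succ m ih =>
    rw [pow_succ, mul_apply]
    exact IsUltrametricDist.norm_sum_le_of_forall_le_of_nonneg zero_le_one fun i _ =>
      (norm_mul_le _ _).trans (mul_le_one₀ (ih _) (norm_nonneg _) (hx _))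

theorem norm_onePow_intCast_apply_le_one [Algebra ℚ E] {x : NCSeries E n}
    (hx : ∀ w, ‖x w‖ ≤ 1) (k : ℤ) (w : List (Fin n)) : ‖onePow x (k : E) w‖ ≤ 1 := by
  refine IsUltrametricDist.norm_sum_le_of_forall_le_of_nonneg zero_le_one fun m _ => ?_
  rw [genBinom_intCast]
  exact (norm_mul_le _ _).trans <| mul_le_one₀ (IsUltrametricDist.norm_intCast_le_one E _)
    (norm_nonneg _) (norm_pow_apply_le_one hx m w)

end Ultrametric

end NCSeries

theorem Padic.mem_closure_range_intCast_of_norm_le_one {p : ℕ} [Fact p.Prime] {y : ℚ_[p]}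
    (hy : ‖y‖ ≤ 1) : y ∈ closure (Set.range (Int.cast : ℤ → ℚ_[p])) :=
  map_mem_closure continuous_subtype_val (PadicInt.denseRange_intCast (⟨y, hy⟩ : ℤ_[p]))
    (by rintro _ ⟨k, rfl⟩; exact ⟨k, by simp⟩)

theorem binomial_power_tendsto_general (p : ℕ) [Fact p.Prime] {n : ℕ}
    (x : NCSeries ℚ_[p] n) (hx : ∀ w, ‖x w‖ ≤ 1)
    (k : ℕ → ℤ) (t : ℚ_[p])
    (hk : Filter.Tendsto (fun i => ((k i : ℤ) : ℚ_[p])) Filter.atTop (nhds t)) :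
    (∀ w : List (Fin n),
      Filter.Tendsto (fun i => NCSeries.onePow x ((k i : ℤ) : ℚ_[p]) w)
        Filter.atTop (nhds (NCSeries.onePow x t w))) ∧
    (∀ w : List (Fin n),
      NCSeries.onePow x t w ∈ closure (Set.range ((Int.cast : ℤ → ℚ_[p])))) := by
  have htend : ∀ w : List (Fin n),
      Tendsto (fun i => NCSeries.onePow x ((k i : ℤ) : ℚ_[p]) w) atTop
        (𝓝 (NCSeries.onePow x t w)) :=
    fun w => ((NCSeries.continuous_onePow_apply x w).tendsto t).comp hk
  refine ⟨htend, fun w => isClosed_closure.mem_of_tendsto (htend w) (.of_forall fun i => ?_)⟩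
  exact Padic.mem_closure_range_intCast_of_norm_le_one
    (NCSeries.norm_onePow_intCast_apply_le_one hx (k i) w)

/-- In noncommutative formal power series over `ℚ_p`, let `x` have zero
constant term and all coefficients in `ℤ_p`, and let `(kᵢ)` be a sequence of integers
converging to `t ∈ ℤ_p`. Then `(1+x)^{kᵢ}` converges coefficientwise to `(1+x)^t` (where
`(1+x)^t` is the binomial series); in particular each coefficient of `(1+x)^t` is a
`p`-adic limit of integers, i.e. lies in `ℤ_p`. -/
theorem binomial_power_tendsto (p : ℕ) [Fact p.Prime] {n : ℕ}
    (x : NCSeries ℚ_[p] n) (hx0 : x [] = 0) (hx : ∀ w, ‖x w‖ ≤ 1)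
    (k : ℕ → ℤ) (t : ℚ_[p])
    (hk : Filter.Tendsto (fun i => ((k i : ℤ) : ℚ_[p])) Filter.atTop (nhds t)) :
    (∀ w : List (Fin n),
      Filter.Tendsto (fun i => NCSeries.onePow x ((k i : ℤ) : ℚ_[p]) w)
        Filter.atTop (nhds (NCSeries.onePow x t w))) ∧
    (∀ w : List (Fin n),
      NCSeries.onePow x t w ∈ closure (Set.range ((Int.cast : ℤ → ℚ_[p])))) :=
  binomial_power_tendsto_general p x hx k t hk
end
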